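/- arXiv:0909.5582 — 2 statements merged into one kernel-verified Lean document; each statement's English description precedes it below -/
import Mathlib

section
/- Let H₊ = ℂ[λ]⊗ℂⁿ and let W be a λ-closed submodule with λʳH₊ ⊆ W ⊆ H₊. With δ_{i+1} = P_i(W ∩ λⁱH₊), define W⁰ = Σ_{i=0}^{r-1} λⁱδ_{i+1} + λʳH₊. Then W⁰ is a λ-closed submodule with λʳH₊ ⊆ W⁰ ⊆ H₊, and P_i(W⁰ ∩ λⁱH₊) = δ_{i+1}, i.e., the S¹-invariant limit has the same δ-subspaces as W. -/
/-- `ℂⁿ`. -/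
abbrev Vn (n : ℕ) := Fin n → ℂ
/-- `H₊ = ℂ[λ] ⊗ ℂⁿ`, polynomials in `λ` with coefficients in `ℂⁿ`. -/
abbrev Hp (n : ℕ) := ℕ →₀ Vn n
/-- Multiplication by `λ` (shift of coefficients). -/
noncomputable def lam (n : ℕ) : Hp n →ₗ[ℂ] Hp n := Finsupp.lmapDomain (Vn n) ℂ (· + 1)
/-- `P_i`, extraction of the coefficient of `λ^i`. -/
noncomputable def P (n : ℕ) (i : ℕ) : Hp n →ₗ[ℂ] Vn n := Finsupp.lapply i



lemma lam_apply_succ (n : ℕ) (x : Hp n) (j : ℕ) : lam n x (j+1) = x j := by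
  simpa [lam] using Finsupp.mapDomain_apply (f := (· + 1)) (add_left_injective 1) x j

lemma lam_apply_zero (n : ℕ) (x : Hp n) : lam n x 0 = 0 := by
  simpa [lam] using Finsupp.mapDomain_notin_range (f := (· + 1)) x 0 (by simp)

lemma lam_pow_apply (n k : ℕ) (x : Hp n) (j : ℕ) : ((lam n)^k) x (j + k) = x j := by
  induction k generalizing x j with
  | zero => simp
  | succ m ih =>
    rw [pow_succ, Module.End.mul_apply, show j + (m+1) = (j+1) + m by ring, ih, lam_apply_succ]

lemma lam_pow_apply_lt (n k : ℕ) (x : Hp n) (j : ℕ) (hj : j < k) : ((lam n)^k) x j = 0 := by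
  induction k generalizing x j with
  | zero => omega
  | succ m ih =>
    rw [pow_succ, Module.End.mul_apply]
    rcases lt_or_ge j m with h | h
    · exact ih _ _ h
    · have hjm : j = m := by omega
      subst hjm
      have := lam_pow_apply n j (lam n x) 0
      simp only [zero_add] at this
      rw [this, lam_apply_zero]

lemma mem_range_lam_pow (n k : ℕ) (x : Hp n) :
    x ∈ LinearMap.range ((lam n)^k) ↔ ∀ j < k, x j = 0 := by
  constructor
  · rintro ⟨y, rfl⟩ j hj
    exact lam_pow_apply_lt n k y j hj
  · intro h
    refine ⟨Finsupp.comapDomain (· + k) x (fun a _ b _ hab => by simpa using hab), ?_⟩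
    ext j
    rcases lt_or_ge j k with hj | hj
    · rw [lam_pow_apply_lt n k _ j hj, h j hj]
    · obtain ⟨m, rfl⟩ : ∃ m, j = m + k := ⟨j - k, by omega⟩
      rw [lam_pow_apply]
      rfl

lemma single_mem_range_lam_pow (n : ℕ) {k m : ℕ} (hk : m ≤ k) (v : Vn n) :
    Finsupp.single k v ∈ LinearMap.range ((lam n)^m) := by
  rw [mem_range_lam_pow]
  intro j hj
  rw [Finsupp.single_apply, if_neg (by omega)]

lemma d_mono (n : ℕ) (W : Submodule ℂ (Hp n)) (hlam : W.map (lam n) ≤ W) (i : ℕ) :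
    (W ⊓ LinearMap.range ((lam n) ^ i)).map (P n i) ≤
      (W ⊓ LinearMap.range ((lam n) ^ (i+1))).map (P n (i+1)) := by
  rintro v ⟨x, hx, rfl⟩
  rw [SetLike.mem_coe, Submodule.mem_inf] at hx
  obtain ⟨hxW, hxr⟩ := hx
  refine ⟨lam n x, ?_, ?_⟩
  rotate_left
  · simp [P, lam_apply_succ]
  rw [SetLike.mem_coe, Submodule.mem_inf]
  refine ⟨hlam ⟨x, hxW, rfl⟩, ?_⟩
  · rw [mem_range_lam_pow] at hxr ⊢
    intro j hj
    cases j with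
    | zero => exact lam_apply_zero n x
    | succ m => rw [lam_apply_succ]; exact hxr m (by omega)

lemma lam_comp_lsingle (n i : ℕ) :
    (lam n) ∘ₗ (Finsupp.lsingle i : Vn n →ₗ[ℂ] Hp n)
      = (Finsupp.lsingle (i+1) : Vn n →ₗ[ℂ] Hp n) :=
  LinearMap.ext fun v => by simp [lam, Finsupp.mapDomain_single]

/-- With `δ_{i+1} = P_i(W ∩ λⁱH₊)`, the `S¹`-invariant limit
`W⁰ = Σ_{i<r} λⁱδ_{i+1} + λʳH₊` is a λ-closed submodule with
`λʳH₊ ⊆ W⁰ ⊆ H₊`, and it has the same δ-subspaces as `W`: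
`P_i(W⁰ ∩ λⁱH₊) = δ_{i+1}` for all `i < r`. -/
theorem stmt17 (n r : ℕ) (W : Submodule ℂ (Hp n))
    (hlam : W.map (lam n) ≤ W)
    (hlow : LinearMap.range ((lam n) ^ r) ≤ W) :
    let d : ℕ → Submodule ℂ (Vn n) := fun i =>
      (W ⊓ LinearMap.range ((lam n) ^ i)).map (P n i)
    let W0 : Submodule ℂ (Hp n) :=
      (⨆ i : Fin r, (d i).map (Finsupp.lsingle (i : ℕ) : Vn n →ₗ[ℂ] Hp n)) ⊔
        LinearMap.range ((lam n) ^ r)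
    W0.map (lam n) ≤ W0 ∧ LinearMap.range ((lam n) ^ r) ≤ W0 ∧
      ∀ i < r, (W0 ⊓ LinearMap.range ((lam n) ^ i)).map (P n i) = d i := by
  intro d W0
  have hW0 : W0 = (⨆ i : Fin r, (d i).map (Finsupp.lsingle (i : ℕ) : Vn n →ₗ[ℂ] Hp n)) ⊔
        LinearMap.range ((lam n) ^ r) := rfl
  refine ⟨?_, le_sup_right, ?_⟩
  · rw [hW0, Submodule.map_sup, Submodule.map_iSup]
    apply sup_le
    · apply iSup_le
      intro i
      rw [← Submodule.map_comp, lam_comp_lsingle]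
      rcases Nat.lt_or_ge ((i : ℕ) + 1) r with h | h
      · calc (d i).map (Finsupp.lsingle ((i:ℕ)+1))
            ≤ (d ((i:ℕ)+1)).map (Finsupp.lsingle ((i:ℕ)+1)) :=
              Submodule.map_mono (d_mono n W hlam i)
          _ ≤ ⨆ j : Fin r, (d (j:ℕ)).map (Finsupp.lsingle (j:ℕ) : Vn n →ₗ[ℂ] Hp n) :=
              le_iSup (fun j : Fin r => (d (j:ℕ)).map (Finsupp.lsingle (j:ℕ) : Vn n →ₗ[ℂ] Hp n))
                (⟨(i:ℕ)+1, h⟩ : Fin r)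
          _ ≤ W0 := by rw [hW0]; exact le_sup_left
      · refine le_trans ?_ (le_sup_right : _ ≤ W0)
        rintro x ⟨v, hv, rfl⟩
        simpa using single_mem_range_lam_pow n h v
    · refine le_trans ?_ (le_sup_right : _ ≤ W0)
      rintro x ⟨y, hy, rfl⟩
      rw [SetLike.mem_coe, mem_range_lam_pow] at hy
      rw [mem_range_lam_pow]
      intro j hj
      cases j with
      | zero => exact lam_apply_zero n y
      | succ m => rw [lam_apply_succ]; exact hy m (by omega)
  · intro i hi
    apply le_antisymm
    · refine le_trans (Submodule.map_mono inf_le_left) ?_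
      rw [hW0, Submodule.map_sup, Submodule.map_iSup]
      apply sup_le
      · apply iSup_le
        intro j
        rw [← Submodule.map_comp]
        by_cases hij : (j : ℕ) = i
        · subst hij
          have hc : (P n (j:ℕ)) ∘ₗ (Finsupp.lsingle (j:ℕ) : Vn n →ₗ[ℂ] Hp n) = LinearMap.id :=
            LinearMap.ext fun v => by simp [P]
          rw [hc, Submodule.map_id]
        · have hc : (P n i) ∘ₗ (Finsupp.lsingle (j:ℕ) : Vn n →ₗ[ℂ] Hp n) = 0 :=
            LinearMap.ext fun v => by simp [P, Finsupp.single_apply, hij]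
          rw [hc, Submodule.map_zero]
          exact bot_le
      · rintro x ⟨y, hy, rfl⟩
        rw [SetLike.mem_coe, mem_range_lam_pow] at hy
        simpa [P, hy i hi] using (d i).zero_mem
    · intro v hv
      refine ⟨Finsupp.single i v, ?_, by simp [P]⟩
      rw [SetLike.mem_coe, Submodule.mem_inf]
      constructor
      · rw [hW0]
        exact Submodule.mem_sup_left (Submodule.mem_iSup_of_mem (⟨i, hi⟩ : Fin r) ⟨v, hv, by simp⟩)
      · exact single_mem_range_lam_pow n le_rfl v
end

section
/- Let H₊ = ℂ[λ]⊗ℂⁿ, and suppose W is a λ-closed submodule with λʳH₊ ⊆ W ⊆ H₊ such that δ_i = P_{i-1}(W ∩ λ^{i-1}H₊) is a fixed subspace δ ⊆ ℂⁿ with δ_i = δ_{i+1} for some 1 ≤ i ≤ r−1 (so that the consecutive δ's coincide). Define η = π_δ + λπ_δ^⊥ (an invertible element of the loop algebra, with inverse π_δ + λ⁻¹π_δ^⊥). Then the submodule W̃ = η⁻¹W satisfies λ^{r-1}H₊ ⊆ W̃ ⊆ H₊, provided δ_1 ⊆ δ and δ ⊆ δ_r. -/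
/-- `ℂⁿ` with its standard Hermitian inner product. -/
abbrev E (n : ℕ) := EuclideanSpace ℂ (Fin n)
/-- `H = ℂ[λ,λ⁻¹] ⊗ ℂⁿ`, Laurent polynomials with coefficients in `ℂⁿ`. -/
abbrev HL (n : ℕ) := ℤ →₀ E n

/-- Multiplication by `λᵏ` on `H`. -/
noncomputable def shiftL (n : ℕ) (k : ℤ) : HL n →ₗ[ℂ] HL n :=
  Finsupp.lmapDomain (E n) ℂ (· + k)

/-- The submodule `λᵏH₊` of `H`. -/
noncomputable def HplusL (n : ℕ) (k : ℤ) : Submodule ℂ (HL n) where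
  carrier := {f | ∀ i : ℤ, i < k → f i = 0}
  add_mem' := by
    intro a b ha hb i hi
    simp [Finsupp.add_apply, ha i hi, hb i hi]
  zero_mem' := by intro i hi; simp
  smul_mem' := by
    intro c f hf i hi
    simp [Finsupp.smul_apply, hf i hi]

/-- Coefficientwise application of an endomorphism of `ℂⁿ` to `H`. -/
noncomputable def ap (n : ℕ) (g : E n →ₗ[ℂ] E n) : HL n →ₗ[ℂ] HL n :=
  Finsupp.lsum ℂ (fun i => (Finsupp.lsingle i).comp g)

/-- Orthogonal projection onto a subspace, as an endomorphism. -/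
noncomputable def proj {n : ℕ} (K : Submodule ℂ (E n)) : E n →ₗ[ℂ] E n :=
  K.subtype ∘ₗ (K.orthogonalProjectionOnto).toLinearMap

/-- The operator `η⁻¹ = π_δ + λ⁻¹π_δ^⊥` on `H`. -/
noncomputable def etainv (n : ℕ) (δ : Submodule ℂ (E n)) : HL n →ₗ[ℂ] HL n :=
  ap n (proj δ) + (shiftL n (-1)) ∘ₗ (ap n (proj δᗮ))


lemma ap_apply (n : ℕ) (g : E n →ₗ[ℂ] E n) (f : HL n) (i : ℤ) :
    ap n g f i = g (f i) := by
  induction f using Finsupp.induction_linear with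
  | zero => simp
  | add a b ha hb => simp [ha, hb]
  | single j x => simp [ap, Finsupp.single_apply, apply_ite g]

lemma shiftL_apply (n : ℕ) (k : ℤ) (f : HL n) (i : ℤ) :
    shiftL n k f i = f (i - k) := by
  have := Finsupp.mapDomain_apply (add_left_injective k) f (i - k)
  simpa [shiftL, Finsupp.lmapDomain_apply] using this

lemma proj_mem {n : ℕ} (δ : Submodule ℂ (E n)) (x : E n) : proj δ x ∈ δ :=
  (δ.orthogonalProjectionOnto x).2

lemma proj_eq_self {n : ℕ} {δ : Submodule ℂ (E n)} {x : E n} (hx : x ∈ δ) :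
    proj δ x = x := by
  simp only [proj, LinearMap.coe_comp, Function.comp_apply, ContinuousLinearMap.coe_coe,
    Submodule.coe_subtype]
  exact (Submodule.starProjection_eq_self_iff (K := δ)).2 hx

lemma proj_orth_eq_zero {n : ℕ} {δ : Submodule ℂ (E n)} {x : E n} (hx : x ∈ δᗮ) :
    proj δ x = 0 := by
  simp [proj, Submodule.orthogonalProjectionOnto_apply_of_mem_orthogonal hx]

lemma proj_add_proj {n : ℕ} (δ : Submodule ℂ (E n)) (x : E n) :
    proj δ x + proj δᗮ x = x := by
  exact Submodule.starProjection_add_starProjection_orthogonal (K := δ) x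

lemma etainv_apply (n : ℕ) (δ : Submodule ℂ (E n)) (f : HL n) (i : ℤ) :
    etainv n δ f i = proj δ (f i) + proj δᗮ (f (i + 1)) := by
  simp [etainv, shiftL_apply, ap_apply, sub_neg_eq_add]

/-- Degree reduction: if `W` is a λ-closed submodule with `λʳH₊ ⊆ W ⊆ H₊` and
`δ ⊆ ℂⁿ` satisfies `δ_1 = P₀(W) ⊆ δ` and `δ ⊆ δ_r = P_{r-1}(W ∩ λ^{r-1}H₊)`,
then `W̃ = η⁻¹W` (with `η = π_δ + λπ_δ^⊥`) satisfies `λ^{r-1}H₊ ⊆ W̃ ⊆ H₊`. -/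
theorem stmt18 (n r : ℕ) (hr : 1 ≤ r) (W : Submodule ℂ (HL n))
    (hW1 : W ≤ HplusL n 0) (hWr : HplusL n (r : ℤ) ≤ W)
    (hlam : W.map (shiftL n 1) ≤ W)
    (δ : Submodule ℂ (E n))
    (hδ1 : W.map (Finsupp.lapply (0 : ℤ)) ≤ δ)
    (hδr : δ ≤ (W ⊓ HplusL n ((r : ℤ) - 1)).map (Finsupp.lapply ((r : ℤ) - 1))) :
    HplusL n ((r : ℤ) - 1) ≤ W.map (etainv n δ) ∧
      W.map (etainv n δ) ≤ HplusL n 0 := by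
  constructor
  · -- λ^{r-1}H₊ ⊆ η⁻¹W
    intro f hf
    set g : HL n := (ap n (proj δ) + (shiftL n 1) ∘ₗ (ap n (proj δᗮ))) f with hg
    have hgi : ∀ i : ℤ, g i = proj δ (f i) + proj δᗮ (f (i - 1)) := by
      intro i; simp [hg, ap_apply, shiftL_apply]
    have h1 : ∀ x, proj δ (proj δ x) = proj δ x := fun x => proj_eq_self (proj_mem δ x)
    have h2 : ∀ x, proj δ (proj δᗮ x) = 0 := fun x => proj_orth_eq_zero (proj_mem δᗮ x)
    have h3 : ∀ x, proj δᗮ (proj δ x) = 0 := fun x =>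
      proj_orth_eq_zero (Submodule.le_orthogonal_orthogonal δ (proj_mem δ x))
    have h4 : ∀ x, proj δᗮ (proj δᗮ x) = proj δᗮ x := fun x => proj_eq_self (proj_mem δᗮ x)
    have hinv : etainv n δ g = f := by
      apply Finsupp.ext
      intro i
      have e1 : (i : ℤ) + 1 - 1 = i := by ring
      rw [etainv_apply, hgi i, hgi (i+1), e1, map_add, map_add, h1, h2, h3, h4, add_zero,
        zero_add, proj_add_proj]
    -- get w' ∈ W ∩ λ^{r-1}H₊ with w'(r-1) = proj δ (f (r-1))
    obtain ⟨w', hw', hw'val⟩ := hδr (proj_mem δ (f ((r:ℤ) - 1)))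
    have hw'W : w' ∈ W := hw'.1
    have hw'H : w' ∈ HplusL n ((r:ℤ) - 1) := hw'.2
    have hw'r : w' ((r:ℤ) - 1) = proj δ (f ((r:ℤ) - 1)) := hw'val
    have hdiff : g - w' ∈ HplusL n (r : ℤ) := by
      intro i hi
      rcases lt_or_eq_of_le (Int.lt_add_one_iff.mp (by omega : i < ((r:ℤ) - 1) + 1)) with h | h
      · have hfi : f i = 0 := hf i h
        have hfi1 : f (i - 1) = 0 := hf (i - 1) (by omega)
        have : g i = 0 := by rw [hgi, hfi, hfi1]; simp
        simp [Finsupp.sub_apply, this, hw'H i h]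
      · have hfi1 : f (i - 1) = 0 := hf (i - 1) (by omega)
        have hgi' : g i = proj δ (f i) := by rw [hgi, hfi1]; simp
        rw [Finsupp.sub_apply, hgi', h, hw'r, sub_self]
    have hgW : g ∈ W := by
      have := W.add_mem (hWr hdiff) hw'W
      simpa using this
    exact ⟨g, hgW, hinv⟩
  · -- η⁻¹W ⊆ H₊
    rintro _ ⟨w, hw, rfl⟩
    intro i hi
    rw [etainv_apply]
    have hwi : w i = 0 := hW1 hw i (by omega)
    rcases lt_or_eq_of_le (by omega : i + 1 ≤ 0) with h | h
    · have : w (i + 1) = 0 := hW1 hw (i + 1) h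
      simp [hwi, this]
    · have hw0 : w (i + 1) ∈ δ := by
        have : w (i + 1) ∈ W.map (Finsupp.lapply (0 : ℤ)) := by
          refine ⟨w, hw, ?_⟩
          simp [h]
        exact hδ1 this
      have : proj δᗮ (w (i+1)) = 0 :=
        proj_orth_eq_zero (Submodule.le_orthogonal_orthogonal δ hw0)
      simp [hwi, this]
end
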